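/- Define h : [0, 1/2] → ℝ by h(w) = (1/4)·ln((1 + 2w + 4w²)/(1 − 2w + 4w²)) − w. Then h(w) equals the real part of f_0 at the point v = −1/2 + w·e^{−iπ/3}, i.e. h(w) = (1/2)·ln|(1/2 + w e^{−iπ/3})/(−1/2 + w e^{−iπ/3})| − 1 − 2·Re(−1/2 + w e^{−iπ/3}), and for all w ∈ (0, 1/2], h'(w) = −8w²(1 + 2w²)/((1 + 2w + 4w²)(1 − 2w + 4w²)) < 0. Consequently h is strictly decreasing on [0, 1/2], with its maximum at w = 0. -/

import Mathlib

/-!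
On the segment `v = -1/2 + w e^{-iπ/3}` the unit vector `e^{-iπ/3}` has real part `1/2`, so
`|v + 1|² = (1 + 2w + 4w²)/4` and `|v|² = (1 - 2w + 4w²)/4`, while `-1 - 2 Re v = -w`; this gives
the closed form `h`. Differentiating, the numerator of `h'` collapses to `-8w²(1 + 2w²)`, which
vanishes only at `w = 0`, so `h` is strictly decreasing for `w ≥ 0`.
-/

/-- `h(w) = (1/4)·ln((1 + 2w + 4w²)/(1 - 2w + 4w²)) - w`, the real part of the steep
descent exponent `f₀` along the segment `v = -1/2 + w·e^{-iπ/3}`. -/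
noncomputable def h (w : ℝ) : ℝ :=
  (1 / 4) * Real.log ((1 + 2 * w + 4 * w ^ 2) / (1 - 2 * w + 4 * w ^ 2)) - w

open Complex

lemma neg_I_mul_pi_div_three_eq : -I * Real.pi / 3 = ((-(Real.pi / 3) : ℝ) : ℂ) * I := by
  push_cast
  ring

lemma exp_neg_I_mul_pi_div_three_re : (exp (-I * Real.pi / 3)).re = 1 / 2 := by
  rw [neg_I_mul_pi_div_three_eq, exp_ofReal_mul_I_re, Real.cos_neg, Real.cos_pi_div_three]

lemma normSq_exp_neg_I_mul_pi_div_three : normSq (exp (-I * Real.pi / 3)) = 1 := by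
  rw [neg_I_mul_pi_div_three_eq, normSq_eq_norm_sq, norm_exp_ofReal_mul_I, one_pow]

lemma normSq_ofReal_add_ofReal_mul_exp_neg_I_mul_pi_div_three (a w : ℝ) :
    normSq (a + w * exp (-I * Real.pi / 3)) = a ^ 2 + a * w + w ^ 2 := by
  have hnorm := normSq_exp_neg_I_mul_pi_div_three
  rw [normSq_apply, exp_neg_I_mul_pi_div_three_re] at hnorm
  simp only [normSq_apply, add_re, add_im, mul_re, mul_im, ofReal_re, ofReal_im,
    exp_neg_I_mul_pi_div_three_re]
  linear_combination w ^ 2 * hnorm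

lemma one_add_two_mul_add_four_mul_sq_pos (w : ℝ) : 0 < 1 + 2 * w + 4 * w ^ 2 := by
  nlinarith [sq_nonneg (2 * w + 1 / 2)]

lemma one_sub_two_mul_add_four_mul_sq_pos (w : ℝ) : 0 < 1 - 2 * w + 4 * w ^ 2 := by
  nlinarith [sq_nonneg (2 * w - 1 / 2)]

lemma h_eq_re_f₀ (w : ℝ) :
    h w = (1 / 2) * Real.log ‖(1 / 2 + (w : ℂ) * exp (-I * Real.pi / 3)) /
        (-1 / 2 + (w : ℂ) * exp (-I * Real.pi / 3))‖ - 1 -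
      2 * ((-1 / 2 : ℂ) + (w : ℂ) * exp (-I * Real.pi / 3)).re := by
  have hnum : normSq (1 / 2 + w * exp (-I * Real.pi / 3)) = (1 + 2 * w + 4 * w ^ 2) / 4 := by
    have := normSq_ofReal_add_ofReal_mul_exp_neg_I_mul_pi_div_three (1 / 2) w
    push_cast at this
    rw [this]
    ring
  have hden : normSq (-1 / 2 + w * exp (-I * Real.pi / 3)) = (1 - 2 * w + 4 * w ^ 2) / 4 := by
    have := normSq_ofReal_add_ofReal_mul_exp_neg_I_mul_pi_div_three (-1 / 2) w
    push_cast at this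
    rw [this]
    ring
  have hsq : ‖(1 / 2 + (w : ℂ) * exp (-I * Real.pi / 3)) /
        (-1 / 2 + (w : ℂ) * exp (-I * Real.pi / 3))‖ ^ 2 =
      (1 + 2 * w + 4 * w ^ 2) / (1 - 2 * w + 4 * w ^ 2) := by
    rw [← normSq_eq_norm_sq, normSq_div, hnum, hden, div_div_div_cancel_right₀ four_ne_zero]
  have hre : ((-1 / 2 : ℂ) + (w : ℂ) * exp (-I * Real.pi / 3)).re = -1 / 2 + w / 2 := by
    simp only [add_re, re_ofReal_mul, exp_neg_I_mul_pi_div_three_re]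
    norm_num
    ring
  rw [h, ← hsq, Real.log_pow, hre]
  push_cast
  ring

lemma h_hasDerivAt (w : ℝ) :
    HasDerivAt h (-8 * w ^ 2 * (1 + 2 * w ^ 2) /
      ((1 + 2 * w + 4 * w ^ 2) * (1 - 2 * w + 4 * w ^ 2))) w := by
  have hP := one_add_two_mul_add_four_mul_sq_pos w
  have hQ := one_sub_two_mul_add_four_mul_sq_pos w
  have hdP : HasDerivAt (fun w : ℝ => 1 + 2 * w + 4 * w ^ 2) (2 + 8 * w) w :=
    ((((hasDerivAt_id' w).const_mul 2).const_add 1).add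
      ((hasDerivAt_pow 2 w).const_mul 4)).congr_deriv (by ring)
  have hdQ : HasDerivAt (fun w : ℝ => 1 - 2 * w + 4 * w ^ 2) (-2 + 8 * w) w :=
    ((((hasDerivAt_id' w).const_mul 2).const_sub 1).add
      ((hasDerivAt_pow 2 w).const_mul 4)).congr_deriv (by ring)
  have hd : HasDerivAt h _ w :=
    (((hdP.div hdQ hQ.ne').log (div_pos hP hQ).ne').const_mul (1 / 4)).sub (hasDerivAt_id' w)
  refine hd.congr_deriv ?_
  simp only [Pi.div_apply]
  field_simp
  ring

lemma deriv_h_neg {w : ℝ} (hw : w ≠ 0) : deriv h w < 0 := by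
  rw [(h_hasDerivAt w).deriv]
  have hP := one_add_two_mul_add_four_mul_sq_pos w
  have hQ := one_sub_two_mul_add_four_mul_sq_pos w
  have hw2 : 0 < w ^ 2 := by positivity
  exact div_neg_of_neg_of_pos (by nlinarith) (by positivity)

lemma h_strictAntiOn_Ici : StrictAntiOn h (Set.Ici 0) := by
  refine strictAntiOn_of_deriv_neg (convex_Ici 0)
    (fun w _ => (h_hasDerivAt w).continuousAt.continuousWithinAt) fun w hw => ?_
  rw [interior_Ici] at hw
  exact deriv_h_neg hw.ne'

/-- `h(w)` equals `Re f₀(-1/2 + w e^{-iπ/3})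
= (1/2)·ln|(1/2 + w e^{-iπ/3})/(-1/2 + w e^{-iπ/3})| - 1 - 2·Re(-1/2 + w e^{-iπ/3})`
on `[0, 1/2]`; for `w ∈ (0, 1/2]` its derivative is
`h'(w) = -8w²(1 + 2w²)/((1 + 2w + 4w²)(1 - 2w + 4w²)) < 0`; consequently `h` is strictly
decreasing on `[0, 1/2]`, with its maximum at `w = 0`. -/
theorem statement13 :
    (∀ w ∈ Set.Icc (0 : ℝ) (1 / 2),
        h w = (1 / 2) * Real.log (‖
            ((1 / 2 + (w : ℂ) * Complex.exp (-Complex.I * Real.pi / 3)) /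
              (-1 / 2 + (w : ℂ) * Complex.exp (-Complex.I * Real.pi / 3)))‖) - 1 -
          2 * ((-1 / 2 : ℂ) + (w : ℂ) * Complex.exp (-Complex.I * Real.pi / 3)).re) ∧
    (∀ w ∈ Set.Ioc (0 : ℝ) (1 / 2),
        deriv h w = -8 * w ^ 2 * (1 + 2 * w ^ 2) /
            ((1 + 2 * w + 4 * w ^ 2) * (1 - 2 * w + 4 * w ^ 2)) ∧
          deriv h w < 0) ∧
    StrictAntiOn h (Set.Icc 0 (1 / 2)) ∧
    (∀ w ∈ Set.Ioc (0 : ℝ) (1 / 2), h w < h 0) := by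
  refine ⟨fun w _ => h_eq_re_f₀ w, fun w hw => ⟨(h_hasDerivAt w).deriv, deriv_h_neg hw.1.ne'⟩,
    h_strictAntiOn_Ici.mono Set.Icc_subset_Ici_self, fun w hw => ?_⟩
  exact h_strictAntiOn_Ici Set.self_mem_Ici hw.1.le hw.1
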